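/- Let p be an odd prime. In F_p[y_1,...,y_n]: the determinant [0,1,...,n-2,n] (exponent sequence 0,...,n-2 with n appended) equals L_{n-1} · V_n · (Q_{n-1,n-2}^p + V_n^{p-1}), where Q_{n-1,n-2} is a Dickson invariant in y_1,...,y_{n-1} and V_n = L_n/L_{n-1}. -/

import Mathlib

/-!
With `'` marking minors in the first `n + 1` variables, `[0,…,n]' = L_{n+1}`,
`[1,…,n+1]' = L_{n+1}^p` and `[1,…,n,n+2]' = L_{n+1,n}^p`, while `[1,…,n+2] = L_{n+2}^p`
(Frobenius). Applying the minors `[1,…,n,x]'` to the linear dependence of the `n + 3` columns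
`y^{p^0}, …, y^{p^{n+2}}` of length `n + 2` gives the three-term Plücker relation
`[0,…,n,n+2] · L_{n+1}^p = L_{n+2} · L_{n+1,n}^p + L_{n+2}^p · L_{n+1}`.
Substituting `L_{n+1,n} = L_{n+1} Q` and `L_{n+2} = L_{n+1} V` and cancelling `L_{n+1}^p ≠ 0`
gives the formula.
-/

open MvPolynomial Finset

/-- `br p e = det (y_i ^ (p ^ e_j))` in `F_p[y_1,…,y_n]`. -/
noncomputable def br (p : ℕ) {n : ℕ} (e : Fin n → ℕ) : MvPolynomial (Fin n) (ZMod p) :=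
  Matrix.det (Matrix.of fun i j : Fin n => (X i : MvPolynomial (Fin n) (ZMod p)) ^ p ^ e j)

/-- `L_n = [0,1,…,n-1]`. -/
noncomputable def Lpoly (p n : ℕ) : MvPolynomial (Fin n) (ZMod p) :=
  br p (fun j : Fin n => (j : ℕ))

/-- `L_{n,s} = [0,…,ŝ,…,n]`. -/
noncomputable def Ls (p n s : ℕ) : MvPolynomial (Fin n) (ZMod p) :=
  br p (fun j : Fin n => if (j : ℕ) < s then (j : ℕ) else (j : ℕ) + 1)

theorem Fin.val_succAbove {N : ℕ} (c : Fin (N + 1)) (j : Fin N) :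
    (c.succAbove j : ℕ) = if (j : ℕ) < c then (j : ℕ) else j + 1 := by
  unfold Fin.succAbove
  split_ifs <;> simp_all [Fin.lt_def]

namespace Matrix

variable {R : Type*} [CommRing R]

theorem sum_det_succAbove_smul_eq_zero {N : ℕ} (u : Fin (N + 1) → Fin N → R) :
    ∑ c : Fin (N + 1), ((-1) ^ (c : ℕ) * det (of fun i j => u (c.succAbove j) i)) • u c = 0 := by
  funext i
  -- Expand, along its first row, a matrix whose first row repeats row `i` of the others.
  have hzero : det (of fun r c => u c ((Fin.cons i id : Fin (N + 1) → Fin N) r)) = 0 :=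
    det_zero_of_row_eq (Fin.succ_ne_zero i).symm (by ext; simp)
  rw [det_succ_row_zero] at hzero
  simpa [Finset.sum_apply, submatrix, mul_comm, mul_assoc] using hzero

theorem pluecker_three_term {m : ℕ} (v : ℕ → Fin (m + 2) → R) :
    det (of fun i j : Fin (m + 2) => v (if (j : ℕ) < m + 1 then j else m + 2) i) *
        det (of fun i j : Fin (m + 1) => v (j + 1) i.castSucc) =
      det (of fun i j : Fin (m + 2) => v j i) *
          det (of fun i j : Fin (m + 1) => v (if (j : ℕ) < m then j + 1 else m + 2) i.castSucc) +
        det (of fun i j : Fin (m + 2) => v (j + 1) i) *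
          det (of fun i j : Fin (m + 1) => v j i.castSucc) := by
  set A : Matrix (Fin (m + 1)) (Fin (m + 1)) R := of fun i j => v (j + 1) i.castSucc
  -- `φ x` is the truncated minor of `v 1, …, v m, x`; apply it to the linear dependence.
  let φ : (Fin (m + 2) → R) →ₗ[R] R :=
    { toFun := fun x => det (A.updateCol (Fin.last m) (x ∘ Fin.castSucc))
      map_add' := fun x y => det_updateCol_add _ _ _ _
      map_smul' := fun s x => det_updateCol_smul _ _ _ _ }
  have hrel := congrArg φ (sum_det_succAbove_smul_eq_zero fun c : Fin (m + 3) => v c)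
  rw [map_sum, map_zero, Fin.sum_univ_succ, Fin.sum_univ_castSucc, Fin.sum_univ_castSucc] at hrel
  have hφ_mid : ∀ k : Fin m, φ (v (k + 1)) = 0 := fun k =>
    det_updateCol_eq_zero (Fin.castSucc_lt_last k).ne
  have hφ_zero : φ (v 0) = (-1) ^ m * det (of fun i j : Fin (m + 1) => v j i.castSucc) := by
    have hrot : A.updateCol (Fin.last m) (v 0 ∘ Fin.castSucc) =
        (of fun i j : Fin (m + 1) => v j i.castSucc).submatrix id (finRotate (m + 1)) := by
      ext i j
      simp only [updateCol_apply, submatrix_apply, of_apply, coe_finRotate, A, id, Function.comp]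
      split_ifs <;> rfl
    change det (A.updateCol _ _) = _
    rw [hrot, det_permute', sign_finRotate]
    simp
  have hφ_succ_last : φ (v (m + 1)) = det A := congrArg det (updateCol_eq_self A (Fin.last m))
  have hφ_last : φ (v (m + 2)) =
      det (of fun i j : Fin (m + 1) => v (if (j : ℕ) < m then j + 1 else m + 2) i.castSucc) := by
    change det (A.updateCol _ _) = _
    congr 1
    ext i j
    simp only [updateCol_apply, of_apply, A, Function.comp, Fin.ext_iff, Fin.val_last]
    split_ifs <;> first | rfl | omega
  have hminor : (of fun i j : Fin (m + 2) => v (if (j : ℕ) < m + 1 then j else j + 1) i) =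
      of fun i (j : Fin (m + 2)) => v (if (j : ℕ) < m + 1 then j else m + 2) i := by
    ext i j
    simp only [of_apply]
    split_ifs
    · rfl
    · have := j.2
      congr 1
      omega
  simp only [map_smul, Fin.succ_last, Fin.val_zero, Fin.val_succ, Fin.val_castSucc, Fin.val_last,
    hφ_mid, mul_zero, Finset.sum_const_zero, zero_add, Fin.val_succAbove, Nat.not_lt_zero,
    if_false, Fin.is_lt, if_true, hminor, hφ_zero, hφ_succ_last, hφ_last, pow_zero, one_mul,
    pow_succ, smul_eq_mul] at hrel
  rw [← sub_eq_zero, ← ((isUnit_one.neg).pow m).mul_right_eq_zero]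
  linear_combination (-1 : R) * hrel

end Matrix

/-- The diagonal monomial `∏ X i ^ e i` occurs with coefficient `1`. -/
theorem MvPolynomial.det_X_pow_ne_zero {R ι : Type*} [CommRing R] [Nontrivial R] [Fintype ι]
    [DecidableEq ι] {e : ι → ℕ} (he : Function.Injective e) :
    Matrix.det (Matrix.of fun i j => (X i : MvPolynomial ι R) ^ e j) ≠ 0 := by
  set d : ι →₀ ℕ := ∑ i, Finsupp.single i (e i)
  have hterm : ∀ σ : Equiv.Perm ι, ∏ i, (X (σ i) : MvPolynomial ι R) ^ e i =
      monomial (∑ i, Finsupp.single (σ i) (e i)) 1 := fun σ => by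
    rw [monomial_sum_one]
    simp only [X_pow_eq_monomial]
  have hexp : ∀ σ : Equiv.Perm ι, ∑ i, Finsupp.single (σ i) (e i) = d → σ = 1 := by
    intro σ h
    ext k
    have hk := DFunLike.congr_fun h (σ k)
    simp only [d, Finsupp.finsetSum_apply, Finsupp.single_apply, σ.injective.eq_iff,
      Finset.sum_ite_eq', Finset.mem_univ, if_true] at hk
    exact (he hk).symm
  have hcoeff : coeff d (Matrix.det (Matrix.of fun i j => (X i : MvPolynomial ι R) ^ e j)) = 1 := by
    rw [Matrix.det_apply, coeff_sum, Finset.sum_eq_single 1]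
    · simp only [Matrix.of_apply, hterm, coeff_smul, coeff_monomial]
      simp [d]
    · intro σ _ hσ
      simp only [Matrix.of_apply, hterm, coeff_smul, coeff_monomial,
        if_neg fun h => hσ (hexp σ h), smul_zero]
    · simp
  intro h
  simp [h] at hcoeff

section Moore

variable {p : ℕ}

theorem rename_br {m n : ℕ} (f : Fin m → Fin n) (e : Fin m → ℕ) :
    rename f (br p e) =
      Matrix.det (Matrix.of fun i j => (X (f i) : MvPolynomial (Fin n) (ZMod p)) ^ p ^ e j) := by
  rw [br, AlgHom.map_det]
  congr 1
  ext i j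
  simp

theorem br_pow [Fact p.Prime] {n : ℕ} (e : Fin n → ℕ) : br p e ^ p = br p (fun j => e j + 1) := by
  rw [br, ← frobenius_def, RingHom.map_det]
  congr 1
  ext i j
  simp [frobenius_def, ← pow_mul, pow_succ]

theorem Lpoly_ne_zero [Fact p.Prime] (n : ℕ) : Lpoly p n ≠ 0 :=
  det_X_pow_ne_zero ((Nat.pow_right_injective (Fact.out : p.Prime).two_le).comp Fin.val_injective)

theorem br_mul_rename_Lpoly_pow [Fact p.Prime] (n : ℕ) :
    br p (fun j : Fin (n + 2) => if (j : ℕ) < n + 1 then (j : ℕ) else n + 2) *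
        rename Fin.castSucc (Lpoly p (n + 1)) ^ p =
      Lpoly p (n + 2) * rename Fin.castSucc (Ls p (n + 1) n) ^ p +
        Lpoly p (n + 2) ^ p * rename Fin.castSucc (Lpoly p (n + 1)) := by
  have hexp : ∀ j : Fin (n + 1), (if (j : ℕ) < n then (j : ℕ) else (j : ℕ) + 1) + 1 =
      if (j : ℕ) < n then (j : ℕ) + 1 else n + 2 := fun j => by
    have := j.2
    split_ifs <;> omega
  rw [← map_pow, ← map_pow, Ls, Lpoly, Lpoly, br_pow, br_pow, br_pow]
  simp only [rename_br, hexp]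
  exact Matrix.pluecker_three_term fun c i => (X i : MvPolynomial (Fin (n + 2)) (ZMod p)) ^ p ^ c

end Moore

/-- The paper's `n ≥ 2` is `n + 2` here. -/
theorem stmt10_general (p n : ℕ) (hp : p.Prime)
    (QQ : MvPolynomial (Fin (n + 1)) (ZMod p))
    (hQQ : Lpoly p (n + 1) * QQ = Ls p (n + 1) n)
    (V : MvPolynomial (Fin (n + 2)) (ZMod p))
    (hV : rename Fin.castSucc (Lpoly p (n + 1)) * V = Lpoly p (n + 2)) :
    br p (fun j : Fin (n + 2) => if (j : ℕ) < n + 1 then (j : ℕ) else n + 2) =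
      rename Fin.castSucc (Lpoly p (n + 1)) * V *
        ((rename Fin.castSucc QQ) ^ p + V ^ (p - 1)) := by
  have : Fact p.Prime := ⟨hp⟩
  set L := rename Fin.castSucc (Lpoly p (n + 1))
  have hL_ne : L ≠ 0 :=
    (map_ne_zero_iff _ (rename_injective _ (Fin.castSucc_injective _))).mpr (Lpoly_ne_zero _)
  have hrel := br_mul_rename_Lpoly_pow (p := p) n
  rw [← hQQ, map_mul, ← hV] at hrel
  have hVp : V ^ p = V * V ^ (p - 1) := by rw [← pow_succ', Nat.sub_add_cancel hp.one_lt.le]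
  apply mul_right_cancel₀ (pow_ne_zero p hL_ne)
  linear_combination hrel + L * L ^ p * hVp

/-- (The paper's `n ≥ 2` is `n+2`.)  The determinant with exponent sequence
`(0,…,n, n+2)` in `n+2` variables equals `L_{n+1} · V_{n+2} · (Q_{n+1,n}^p + V_{n+2}^{p-1})`,
where `Q_{n+1,n}` is a Dickson invariant in the first `n+1` variables and
`V_{n+2} = L_{n+2}/L_{n+1}`. -/
theorem stmt10 (p n : ℕ) (hp : p.Prime) (hodd : Odd p)
    (QQ : MvPolynomial (Fin (n + 1)) (ZMod p))
    (hQQ : Lpoly p (n + 1) * QQ = Ls p (n + 1) n)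
    (V : MvPolynomial (Fin (n + 2)) (ZMod p))
    (hV : rename Fin.castSucc (Lpoly p (n + 1)) * V = Lpoly p (n + 2)) :
    br p (fun j : Fin (n + 2) => if (j : ℕ) < n + 1 then (j : ℕ) else n + 2) =
      rename Fin.castSucc (Lpoly p (n + 1)) * V *
        ((rename Fin.castSucc QQ) ^ p + V ^ (p - 1)) :=
  stmt10_general p n hp QQ hQQ V hV
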